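/- Assume in addition that X is infinite-dimensional. Then the bounded linear map 𝔸⁻¹ : Y → Y, (u,v,w) ↦ ( −γ⁻¹(βu + δv + A⁻¹(αv + w)), u, v ), is not a compact operator; i.e., there is a bounded sequence in Y whose image under 𝔸⁻¹ has no convergent subsequence in Y. -/

import Mathlib

/-!
The second component of `𝔸⁻¹` is the identity `u ↦ u` of `X^{1/2}`, which is not compact:
the vectors `λₙ^{-1/2} eₙ` have `X^{1/2}`-norm one, while for any fixed `q ∈ X^{1/2}` the
weighted coefficients `λₙ ⟨q, eₙ⟩²` tend to zero, so `λₙ^{-1/2} eₙ - q` eventually has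
`X^{1/2}`-norm greater than `1/2`.
-/

open Filter Topology

noncomputable section

local notation "⟪" x ", " y "⟫" => @inner ℝ _ _ x y

variable {X : Type*} [NormedAddCommGroup X] [InnerProductSpace ℝ X] [CompleteSpace X]

/-- Membership in the fractional power space `X^{1/2}` (here `2σ = 1`). -/
def memHalf (e : HilbertBasis ℕ ℝ X) (lam : ℕ → ℝ) (φ : X) : Prop :=
  Summable fun k => lam k * ⟪φ, e k⟫ ^ 2

/-- Membership in the fractional power space `X^1` (here `2σ = 2`). -/
def memOne (e : HilbertBasis ℕ ℝ X) (lam : ℕ → ℝ) (φ : X) : Prop :=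
  Summable fun k => lam k ^ 2 * ⟪φ, e k⟫ ^ 2

/-- The squared `X^{1/2}`-norm: `‖φ‖²_{X^{1/2}} = ∑_k λ_k ⟨φ,e_k⟩²`. -/
def nHalfSq (e : HilbertBasis ℕ ℝ X) (lam : ℕ → ℝ) (φ : X) : ℝ :=
  ∑' k, lam k * ⟪φ, e k⟫ ^ 2

/-- The squared `X^{-1/2}`-norm of an element of `X`: `∑_k λ_k⁻¹ ⟨φ,e_k⟩²`. -/
def nNegSq (e : HilbertBasis ℕ ℝ X) (lam : ℕ → ℝ) (φ : X) : ℝ :=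
  ∑' k, (lam k)⁻¹ * ⟪φ, e k⟫ ^ 2

/-- The diagonal operator `A φ = ∑_k λ_k ⟨φ,e_k⟩ e_k`. -/
def Aop (e : HilbertBasis ℕ ℝ X) (lam : ℕ → ℝ) (φ : X) : X :=
  ∑' k, (lam k * ⟪φ, e k⟫) • e k

/-- The inverse operator `A⁻¹ φ = ∑_k λ_k⁻¹ ⟨φ,e_k⟩ e_k`. -/
def Ainv (e : HilbertBasis ℕ ℝ X) (lam : ℕ → ℝ) (φ : X) : X :=
  ∑' k, ((lam k)⁻¹ * ⟪φ, e k⟫) • e k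

/-- The norm of `Y = X^{1/2} × X^{1/2} × X`. -/
def Ynorm (e : HilbertBasis ℕ ℝ X) (lam : ℕ → ℝ) (u v w : X) : ℝ :=
  Real.sqrt (nHalfSq e lam u + nHalfSq e lam v + ‖w‖ ^ 2)

theorem HilbertBasis.inner_smul_left_eq_ite {ι E : Type*} [DecidableEq ι]
    [NormedAddCommGroup E] [InnerProductSpace ℝ E] (e : HilbertBasis ι ℝ E) (c : ℝ) (i j : ι) :
    ⟪c • e i, e j⟫ = if i = j then c else 0 := by
  rw [real_inner_smul_left, orthonormal_iff_ite.mp e.orthonormal]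
  split_ifs <;> simp

section HalfNorm

variable {E : Type*} [NormedAddCommGroup E] [InnerProductSpace ℝ E] (e : HilbertBasis ℕ ℝ E)
  {lam : ℕ → ℝ}

theorem hasSum_nHalf_smul_basis (c : ℝ) (m : ℕ) :
    HasSum (fun k => lam k * ⟪c • e m, e k⟫ ^ 2) (lam m * c ^ 2) := by
  convert hasSum_single (f := fun k => lam k * ⟪c • e m, e k⟫ ^ 2) m
    (fun k hk => by simp [e.inner_smul_left_eq_ite, Ne.symm hk]) using 1
  simp [e.inner_smul_left_eq_ite]

theorem memHalf_smul_basis (c : ℝ) (m : ℕ) : memHalf e lam (c • e m) :=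
  (hasSum_nHalf_smul_basis e c m).summable

theorem nHalfSq_smul_basis (c : ℝ) (m : ℕ) : nHalfSq e lam (c • e m) = lam m * c ^ 2 :=
  (hasSum_nHalf_smul_basis e c m).tsum_eq

theorem memHalf_zero : memHalf e lam 0 := by
  simpa using memHalf_smul_basis e (lam := lam) 0 0

theorem nHalfSq_zero : nHalfSq e lam 0 = 0 := by
  simpa using nHalfSq_smul_basis e (lam := lam) 0 0

theorem nHalfSq_nonneg (hlam : ∀ k, 0 ≤ lam k) (φ : E) : 0 ≤ nHalfSq e lam φ :=
  tsum_nonneg fun k => mul_nonneg (hlam k) (sq_nonneg _)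

theorem memHalf.sub (hlam : ∀ k, 0 ≤ lam k) {φ ψ : E} (hφ : memHalf e lam φ)
    (hψ : memHalf e lam ψ) : memHalf e lam (φ - ψ) := by
  refine ((hφ.mul_left 2).add (hψ.mul_left 2)).of_nonneg_of_le
    (fun k => mul_nonneg (hlam k) (sq_nonneg _)) fun k => ?_
  rw [inner_sub_left]
  nlinarith [mul_nonneg (hlam k) (sq_nonneg (⟪φ, e k⟫ + ⟪ψ, e k⟫))]

theorem mul_sq_inner_le_nHalfSq (hlam : ∀ k, 0 ≤ lam k) {φ : E} (hφ : memHalf e lam φ) (m : ℕ) :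
    lam m * ⟪φ, e m⟫ ^ 2 ≤ nHalfSq e lam φ :=
  hφ.le_tsum m fun k _ => mul_nonneg (hlam k) (sq_nonneg _)

theorem sqrt_nHalfSq_le_Ynorm (hlam : ∀ k, 0 ≤ lam k) (u v w : E) :
    Real.sqrt (nHalfSq e lam v) ≤ Ynorm e lam u v w :=
  Real.sqrt_le_sqrt (by nlinarith [nHalfSq_nonneg e hlam u, sq_nonneg ‖w‖])

theorem nHalfSq_inv_sqrt_smul_basis (hlam : ∀ k, 0 < lam k) (m : ℕ) :
    nHalfSq e lam ((√(lam m))⁻¹ • e m) = 1 := by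
  rw [nHalfSq_smul_basis, inv_pow, Real.sq_sqrt (hlam m).le, mul_inv_cancel₀ (hlam m).ne']

theorem eventually_quarter_lt_nHalfSq_inv_sqrt_smul_basis_sub (hlam : ∀ k, 0 < lam k) {q : E}
    (hq : memHalf e lam q) :
    ∀ᶠ m in atTop, 1 / 4 < nHalfSq e lam ((√(lam m))⁻¹ • e m - q) := by
  have hlam' : ∀ k, 0 ≤ lam k := fun k => (hlam k).le
  filter_upwards [(Summable.tendsto_atTop_zero hq).eventually
    (gt_mem_nhds (by norm_num : (0 : ℝ) < 1 / 4))] with m hm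
  set t := √(lam m) * ⟪q, e m⟫
  have hsqrt : √(lam m) ^ 2 = lam m := Real.sq_sqrt (hlam' m)
  have ht : t ^ 2 < 1 / 4 := by rwa [mul_pow, hsqrt]
  have hcoef : lam m * ⟪(√(lam m))⁻¹ • e m - q, e m⟫ ^ 2 = (1 - t) ^ 2 := by
    have hne : √(lam m) ≠ 0 := (Real.sqrt_pos.2 (hlam m)).ne'
    rw [inner_sub_left, e.inner_smul_left_eq_ite, if_pos rfl]
    calc lam m * ((√(lam m))⁻¹ - ⟪q, e m⟫) ^ 2
        = (√(lam m) * ((√(lam m))⁻¹ - ⟪q, e m⟫)) ^ 2 := by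
          rw [mul_pow, hsqrt]
      _ = (1 - t) ^ 2 := by rw [mul_sub, mul_inv_cancel₀ hne]
  calc 1 / 4 < (1 - t) ^ 2 := by nlinarith [sq_nonneg (1 - 2 * t)]
    _ = _ := hcoef.symm
    _ ≤ _ := mul_sq_inner_le_nHalfSq e hlam' ((memHalf_smul_basis e _ m).sub e hlam' hq) m

end HalfNorm

theorem inverse_not_compact_general
    (e : HilbertBasis ℕ ℝ X) (lam : ℕ → ℝ) (lam0 : ℝ)
    (hlam0 : 0 < lam0) (hlam : ∀ k, lam0 ≤ lam k)
    (α β γ δ : ℝ) :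
    ∃ u v w : ℕ → X,
      -- the sequence lies in `Y` and is bounded in `Y`
      (∀ n, memHalf e lam (u n) ∧ memHalf e lam (v n)) ∧
      (∃ M : ℝ, ∀ n, Ynorm e lam (u n) (v n) (w n) ≤ M) ∧
      -- no subsequence of the image sequence `𝔸⁻¹(uₙ,vₙ,wₙ)` converges in `Y`
      (∀ k : ℕ → ℕ, StrictMono k → ∀ p q r : X, memHalf e lam p → memHalf e lam q →
        ¬ Tendsto (fun n => Ynorm e lam
            (((-γ⁻¹) • (β • u (k n) + δ • v (k n) + Ainv e lam (α • v (k n) + w (k n)))) - p)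
            (u (k n) - q) (v (k n) - r)) atTop (𝓝 0)) := by
  have hpos : ∀ k, 0 < lam k := fun k => hlam0.trans_le (hlam k)
  refine ⟨fun n => (√(lam n))⁻¹ • e n, 0, 0,
    fun n => ⟨memHalf_smul_basis e _ n, memHalf_zero e⟩,
    ⟨1, fun n => by simp [Ynorm, nHalfSq_inv_sqrt_smul_basis e hpos, nHalfSq_zero]⟩, ?_⟩
  intro k hk p q r _ hq htend
  have hfar := hk.tendsto_atTop.eventually
    (eventually_quarter_lt_nHalfSq_inv_sqrt_smul_basis_sub e hpos hq)
  have hnear := htend.eventually (gt_mem_nhds (by norm_num : (0 : ℝ) < 1 / 2))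
  obtain ⟨n, hfar, hnear⟩ := (hfar.and hnear).exists
  have hhalf : 1 / 2 < Real.sqrt (nHalfSq e lam ((√(lam (k n)))⁻¹ • e (k n) - q)) :=
    Real.lt_sqrt (by norm_num) |>.2 (by linarith)
  exact (hhalf.trans_le (sqrt_nHalfSq_le_Ynorm e (fun k => (hpos k).le) _ _ _)).not_gt hnear

/-- If `X` is infinite dimensional, the bounded linear map
`𝔸⁻¹ : Y → Y`, `(u,v,w) ↦ (-γ⁻¹(βu + δv + A⁻¹(αv + w)), u, v)`, is not compact:
there is a bounded sequence in `Y` whose image under `𝔸⁻¹` has no subsequence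
converging in `Y`. -/
theorem inverse_not_compact
    (e : HilbertBasis ℕ ℝ X) (lam : ℕ → ℝ) (lam0 : ℝ)
    (hlam0 : 0 < lam0) (hlam : ∀ k, lam0 ≤ lam k)
    (hinf : ¬ FiniteDimensional ℝ X)
    (α β γ δ : ℝ) (hα : 0 < α) (hβ : 0 < β) (hγ : 0 < γ) (hδ : 0 < δ) :
    ∃ u v w : ℕ → X,
      -- the sequence lies in `Y` and is bounded in `Y`
      (∀ n, memHalf e lam (u n) ∧ memHalf e lam (v n)) ∧
      (∃ M : ℝ, ∀ n, Ynorm e lam (u n) (v n) (w n) ≤ M) ∧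
      -- no subsequence of the image sequence `𝔸⁻¹(uₙ,vₙ,wₙ)` converges in `Y`
      (∀ k : ℕ → ℕ, StrictMono k → ∀ p q r : X, memHalf e lam p → memHalf e lam q →
        ¬ Tendsto (fun n => Ynorm e lam
            (((-γ⁻¹) • (β • u (k n) + δ • v (k n) + Ainv e lam (α • v (k n) + w (k n)))) - p)
            (u (k n) - q) (v (k n) - r)) atTop (𝓝 0)) :=
  inverse_not_compact_general e lam lam0 hlam0 hlam α β γ δ
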